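/- Let R be a Markov measure on the path space Ω = D([0,1],X), 0 ≤ t ≤ 1, and let P be a conditionable path measure with P ≺ R whose density factorizes as dP/dR = α·β with α, β nonnegative, α measurable with respect to σ(X_{[0,t]}) and β measurable with respect to σ(X_{[t,1]}). Then P-almost everywhere, E_R(α | X_t) and E_R(β | X_t) lie in (0,∞) and E_R(αβ | X_t) = E_R(α | X_t)·E_R(β | X_t) ∈ (0,∞). Furthermore, R-almost everywhere, E_R(αβ | X_t) = 1_{{E_R(α|X_t)<∞, E_R(β|X_t)<∞}} · E_R(α | X_t)·E_R(β | X_t) ∈ [0,∞). -/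

import Mathlib

open MeasureTheory Set

/-- A càdlàg path on `[0,1]`: right-continuous with left limits. -/
def IsCadlag {X : Type*} [TopologicalSpace X] (f : Icc (0:ℝ) 1 → X) : Prop :=
  ∀ t : Icc (0:ℝ) 1, ContinuousWithinAt f (Ici t) t ∧
    ∃ l : X, Filter.Tendsto f (nhdsWithin t (Iio t)) (nhds l)

/-- The path space `D([0,1], X)` of càdlàg paths with values in `X`. -/
def PathSpace (X : Type*) [TopologicalSpace X] : Type _ :=
  {f : Icc (0:ℝ) 1 → X // IsCadlag f}

/-- The canonical process `X_t(ω) = ω_t`. -/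
def canon {X : Type*} [TopologicalSpace X] (t : Icc (0:ℝ) 1) : PathSpace X → X :=
  fun ω => ω.1 t

/-- The σ-field on path space is generated by the canonical process. -/
instance pathSpaceMeasurableSpace (X : Type*) [TopologicalSpace X] [MeasurableSpace X] :
    MeasurableSpace (PathSpace X) :=
  ⨆ t : Icc (0:ℝ) 1, MeasurableSpace.comap (canon t) inferInstance

variable {X : Type*} [TopologicalSpace X] [MeasurableSpace X]

/-- The σ-field `σ(X_t)` generated by the position at time `t`. -/
def mAt (t : Icc (0:ℝ) 1) : MeasurableSpace (PathSpace X) :=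
  MeasurableSpace.comap (canon t) inferInstance

/-- The σ-field `σ(X_{[0,t]})` generated by the past up to time `t`. -/
def mUpTo (t : Icc (0:ℝ) 1) : MeasurableSpace (PathSpace X) :=
  ⨆ s : Icc (0:ℝ) 1, ⨆ _ : s ≤ t, MeasurableSpace.comap (canon s) inferInstance

/-- The σ-field `σ(X_{[t,1]})` generated by the future from time `t` on. -/
def mFrom (t : Icc (0:ℝ) 1) : MeasurableSpace (PathSpace X) :=
  ⨆ s : Icc (0:ℝ) 1, ⨆ _ : t ≤ s, MeasurableSpace.comap (canon s) inferInstance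

/-- The σ-field `σ(X_{[s,t]})` generated by the positions between times `s` and `t`. -/
def mBetween (s t : Icc (0:ℝ) 1) : MeasurableSpace (PathSpace X) :=
  ⨆ u : Icc (0:ℝ) 1, ⨆ _ : s ≤ u ∧ u ≤ t, MeasurableSpace.comap (canon u) inferInstance

/-- `C` is (a version of) the conditional expectation, in `[0,∞]`, of the nonnegative
function `Z` given the sub-σ-field `m`, under the (possibly unbounded) measure `R`:
`C` is `m`-measurable and has the same integral as `Z` on every `m`-measurable set.
For a conditionable path measure this characterizes, up to a.e. equality, the monotone
extension `E_R(Z|m) = lim_n E_R(1_{Ω_1 ∪ … ∪ Ω_n}(Z ∧ n)|m)` of the usual conditional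
expectation along a σ-finite partition `(Ω_k)` of `R`. -/
def IsCondExpNN {Ω : Type*} [MeasurableSpace Ω] (R : Measure Ω) (m : MeasurableSpace Ω)
    (Z C : Ω → ENNReal) : Prop :=
  Measurable[m] C ∧
    ∀ s : Set Ω, MeasurableSet[m] s → ∫⁻ ω in s, C ω ∂ R = ∫⁻ ω in s, Z ω ∂ R

/-- A path measure is conditionable if all its time-marginals are σ-finite. -/
def Conditionable (Q : Measure (PathSpace X)) : Prop :=
  ∀ t : Icc (0:ℝ) 1, SigmaFinite (Q.map (canon t))

/-- A path measure `R` is Markov if it is conditionable and, for every time `t`,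
`R(X_{[t,1]} ∈ · | X_{[0,t]}) = R(X_{[t,1]} ∈ · | X_t)`, i.e. every version of the
conditional expectation given `X_t` of the indicator of a future event is also a version
of its conditional expectation given the whole past `X_{[0,t]}`. -/
def IsMarkovMeasure (R : Measure (PathSpace X)) : Prop :=
  Conditionable R ∧
    ∀ t : Icc (0:ℝ) 1, ∀ B : Set (PathSpace X), MeasurableSet[mFrom t] B →
      ∀ C : PathSpace X → ENNReal,
        IsCondExpNN R (mAt t) (B.indicator fun _ => (1 : ENNReal)) C →
        IsCondExpNN R (mUpTo t) (B.indicator fun _ => (1 : ENNReal)) C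

/-!
Under the Markov property the conditional law of the future given the whole past `X_{[0,t]}`
depends only on `X_t`. The definition says this for indicators of future events; a monotone class
argument extends it to every nonnegative `σ(X_{[t,1]})`-measurable `β`, so that a version of
`E_R(β | X_t)` is also a version of `E_R(β | X_{[0,t]})`. Conditioning `αβ` first on the past,
where `α` is known, and then on `X_t` gives `E_R(αβ | X_t) = E_R(α | X_t) E_R(β | X_t)` `R`-a.e.

Since `P = αβ R`, the function `E_R(αβ | X_t)` is the density of the time-`t` marginal of `P`
with respect to that of `R`. This marginal is σ-finite, so the density is finite `R`-a.e.; it is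
also positive `P`-a.e. The product formula then puts both factors in `(0, ∞)` `P`-a.e., and
gives the indicator form `R`-a.e.
-/

open scoped ENNReal

section CondExpNN

variable {Ω : Type*} {m m' m0 : MeasurableSpace Ω} {μ : Measure Ω} {Z Z' C C' : Ω → ℝ≥0∞}

lemma isCondExpNN_condLExp (hm : m ≤ m0) [SigmaFinite (μ.trim hm)] (Z : Ω → ℝ≥0∞) :
    IsCondExpNN μ m Z μ⁻[Z|m] :=
  ⟨measurable_condLExp m μ Z, fun _ hs => setLIntegral_condLExp hm μ Z hs⟩

namespace IsCondExpNN

lemma ae_eq_condLExp (hm : m ≤ m0) [SigmaFinite (μ.trim hm)] (h : IsCondExpNN μ m Z C) :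
    C =ᵐ[μ] μ⁻[Z|m] :=
  MeasureTheory.ae_eq_condLExp hm μ Z h.1 h.2

lemma ae_eq (hm : m ≤ m0) [SigmaFinite (μ.trim hm)] (h : IsCondExpNN μ m Z C)
    (h' : IsCondExpNN μ m Z C') : C =ᵐ[μ] C' :=
  (h.ae_eq_condLExp hm).trans (h'.ae_eq_condLExp hm).symm

lemma congr_ae (h : IsCondExpNN μ m Z C) (hC' : Measurable[m] C') (hCC' : C =ᵐ[μ] C') :
    IsCondExpNN μ m Z C' :=
  ⟨hC', fun s hs => by rw [← h.2 s hs, lintegral_congr_ae (ae_restrict_of_ae hCC')]⟩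

lemma const_smul (hm : m ≤ m0) (h : IsCondExpNN μ m Z C) (hZ : Measurable Z) (c : ℝ≥0∞) :
    IsCondExpNN μ m (c • Z) (c • C) := by
  refine ⟨h.1.const_smul c, fun s hs => ?_⟩
  simp only [Pi.smul_apply, smul_eq_mul]
  rw [lintegral_const_mul _ (h.1.mono hm le_rfl), lintegral_const_mul _ hZ, h.2 s hs]

lemma add (hm : m ≤ m0) (h : IsCondExpNN μ m Z C) (h' : IsCondExpNN μ m Z' C')
    (hZ : Measurable Z) : IsCondExpNN μ m (Z + Z') (C + C') := by
  refine ⟨h.1.add h'.1, fun s hs => ?_⟩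
  simp only [Pi.add_apply]
  rw [lintegral_add_left (h.1.mono hm le_rfl), lintegral_add_left hZ, h.2 s hs, h'.2 s hs]

lemma iSup (hm : m ≤ m0) {Z C : ℕ → Ω → ℝ≥0∞} (h : ∀ n, IsCondExpNN μ m (Z n) (C n))
    (hZ : ∀ n, Measurable (Z n)) (hZ_mono : Monotone Z)
    (hC_mono : ∀ᵐ ω ∂μ, Monotone fun n => C n ω) :
    IsCondExpNN μ m (fun ω => ⨆ n, Z n ω) (fun ω => ⨆ n, C n ω) := by
  refine ⟨Measurable.iSup fun n => (h n).1, fun s hs => ?_⟩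
  rw [lintegral_iSup' (fun n => ((h n).1.mono hm le_rfl).aemeasurable)
      (ae_restrict_of_ae hC_mono), lintegral_iSup hZ hZ_mono]
  exact iSup_congr fun n => (h n).2 s hs

lemma restrict (hm : m ≤ m0) (h : IsCondExpNN μ m Z C) {s : Set Ω} (hs : MeasurableSet[m] s) :
    IsCondExpNN (μ.restrict s) m Z C :=
  ⟨h.1, fun t ht => by
    rw [Measure.restrict_restrict (hm t ht), h.2 _ (ht.inter hs)]⟩

lemma trim_withDensity_eq (hm : m ≤ m0) (h : IsCondExpNN μ m Z C) :
    (μ.withDensity Z).trim hm = (μ.trim hm).withDensity C := by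
  refine @Measure.ext _ m _ _ fun s hs => ?_
  rw [trim_measurableSet_eq hm hs, withDensity_apply _ hs, withDensity_apply _ (hm s hs),
    setLIntegral_trim hm h.1 hs, h.2 s hs]

lemma lintegral_mul (hm : m ≤ m0) (h : IsCondExpNN μ m Z C) (hZ : Measurable Z)
    {φ : Ω → ℝ≥0∞} (hφ : Measurable[m] φ) :
    ∫⁻ ω, φ ω * Z ω ∂μ = ∫⁻ ω, φ ω * C ω ∂μ := by
  have hφ0 : Measurable φ := hφ.mono hm le_rfl
  calc ∫⁻ ω, φ ω * Z ω ∂μ = ∫⁻ ω, φ ω ∂μ.withDensity Z := by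
        rw [lintegral_withDensity_eq_lintegral_mul μ hZ hφ0]
        simp only [Pi.mul_apply, mul_comm]
    _ = ∫⁻ ω, φ ω ∂(μ.trim hm).withDensity C := by
        rw [← h.trim_withDensity_eq hm, lintegral_trim hm hφ]
    _ = ∫⁻ ω, (C * φ) ω ∂μ.trim hm := lintegral_withDensity_eq_lintegral_mul _ h.1 hφ
    _ = ∫⁻ ω, φ ω * C ω ∂μ :=
        (lintegral_trim hm (h.1.mul hφ)).trans (lintegral_congr fun _ => mul_comm _ _)

lemma ae_lt_top (hm : m ≤ m0) [SigmaFinite (μ.trim hm)]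
    [SigmaFinite ((μ.withDensity Z).trim hm)] (h : IsCondExpNN μ m Z C) :
    ∀ᵐ ω ∂μ, C ω < ∞ := by
  refine ae_of_ae_trim hm ?_
  filter_upwards [Measure.rnDeriv_withDensity (μ.trim hm) h.1,
    Measure.rnDeriv_lt_top ((μ.withDensity Z).trim hm) (μ.trim hm)] with ω hω hω_lt
  rwa [h.trim_withDensity_eq hm, hω] at hω_lt

lemma ae_withDensity_ne_zero (hm : m ≤ m0) (h : IsCondExpNN μ m Z C) :
    ∀ᵐ ω ∂μ.withDensity Z, C ω ≠ 0 := by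
  have hs : MeasurableSet[m] {ω | C ω = 0} := h.1 (measurableSet_singleton 0)
  simp only [ae_iff, ne_eq, not_not]
  rw [withDensity_apply _ (hm _ hs), ← h.2 _ hs,
    setLIntegral_congr_fun (hm _ hs) fun _ hω => hω, lintegral_zero]

lemma ae_eq_mul (hmm' : m ≤ m') (hm' : m' ≤ m0) [SigmaFinite (μ.trim (hmm'.trans hm'))]
    {α β Cα Cβ Cαβ : Ω → ℝ≥0∞} (hα : Measurable[m'] α) (hβ : Measurable β)
    (hαβ : IsCondExpNN μ m (fun ω => α ω * β ω) Cαβ) (hCα : IsCondExpNN μ m α Cα)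
    (hCβ : IsCondExpNN μ m' β Cβ) (hCβm : Measurable[m] Cβ) :
    Cαβ =ᵐ[μ] Cα * Cβ := by
  have hm := hmm'.trans hm'
  refine hαβ.ae_eq hm ⟨hCα.1.mul hCβm, fun s hs => ?_⟩
  calc ∫⁻ ω in s, (Cα * Cβ) ω ∂μ = ∫⁻ ω in s, Cβ ω * Cα ω ∂μ :=
        lintegral_congr fun _ => mul_comm _ _
    _ = ∫⁻ ω in s, Cβ ω * α ω ∂μ :=
        ((hCα.restrict hm hs).lintegral_mul hm (hα.mono hm' le_rfl) hCβm).symm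
    _ = ∫⁻ ω in s, α ω * Cβ ω ∂μ := lintegral_congr fun _ => mul_comm _ _
    _ = ∫⁻ ω in s, α ω * β ω ∂μ :=
        ((hCβ.restrict hm' (hmm' s hs)).lintegral_mul hm' hβ hα).symm

end IsCondExpNN

lemma ae_monotone_condLExp {Z : ℕ → Ω → ℝ≥0∞} (hZ : Monotone Z) :
    ∀ᵐ ω ∂μ, Monotone fun n => μ⁻[Z n|m] ω := by
  filter_upwards [ae_all_iff.2 fun n =>
      condLExp_mono (mΩ := m) (ae_of_all μ (hZ (Nat.le_succ n)))] with ω hω using monotone_nat_of_le_succ hω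

lemma condLExp_iSup_ae_eq (hm : m ≤ m0) [SigmaFinite (μ.trim hm)] {Z : ℕ → Ω → ℝ≥0∞}
    (hZ : ∀ n, Measurable (Z n)) (hZ_mono : Monotone Z) :
    μ⁻[fun ω => ⨆ n, Z n ω|m] =ᵐ[μ] fun ω => ⨆ n, μ⁻[Z n|m] ω :=
  (IsCondExpNN.ae_eq_condLExp hm <| IsCondExpNN.iSup hm (fun n => isCondExpNN_condLExp hm (Z n))
    hZ hZ_mono (ae_monotone_condLExp hZ_mono)).symm

end CondExpNN

lemma sigmaFinite_trim_comap {Ω Y : Type*} {m0 : MeasurableSpace Ω} [MeasurableSpace Y]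
    {μ : Measure Ω} {f : Ω → Y} (hf : Measurable f) [SigmaFinite (μ.map f)] :
    SigmaFinite (μ.trim hf.comap_le) := by
  refine SigmaFinite.of_map _ (comap_measurable f).aemeasurable ?_
  convert ‹SigmaFinite (μ.map f)› using 1
  ext s hs
  rw [Measure.map_apply (comap_measurable f) hs, Measure.map_apply hf hs,
    trim_measurableSet_eq _ (comap_measurable f hs)]

lemma eq_withDensity_of_forall_lintegral_eq {Ω : Type*} [MeasurableSpace Ω] {μ ν : Measure Ω}
    {g : Ω → ℝ≥0∞} (h : ∀ f : Ω → ℝ≥0∞, Measurable f → ∫⁻ ω, f ω ∂ν = ∫⁻ ω, f ω * g ω ∂μ) :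
    ν = μ.withDensity g := by
  ext s hs
  rw [withDensity_apply _ hs, ← lintegral_indicator_one hs,
    h _ (measurable_one.indicator hs), ← lintegral_indicator hs]
  refine lintegral_congr fun ω => ?_
  by_cases hω : ω ∈ s <;> simp [hω]

lemma mul_eq_indicator_of_mul_lt_top {Ω : Type*} {a b : Ω → ℝ≥0∞} {ω : Ω}
    (h : a ω * b ω < ∞) :
    a ω * b ω = {ω' | a ω' < ∞ ∧ b ω' < ∞}.indicator (fun ω' => a ω' * b ω') ω := by
  rcases ENNReal.mul_lt_top_iff.1 h with hfin | hzero | hzero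
  · rw [indicator_of_mem (show ω ∈ {ω' | a ω' < ∞ ∧ b ω' < ∞} from hfin)]
  all_goals simp [indicator_apply, hzero]

section PathSpace

lemma measurable_canon (t : Icc (0:ℝ) 1) : Measurable (canon (X := X) t) :=
  measurable_iff_comap_le.2 <|
    le_iSup (fun s => MeasurableSpace.comap (canon (X := X) s) inferInstance) t

lemma mAt_le (t : Icc (0:ℝ) 1) : mAt t ≤ pathSpaceMeasurableSpace X :=
  (measurable_canon t).comap_le

lemma mAt_le_mUpTo (t : Icc (0:ℝ) 1) : (mAt t : MeasurableSpace (PathSpace X)) ≤ mUpTo t :=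
  le_iSup₂ (f := fun (s : Icc (0:ℝ) 1) (_ : s ≤ t) =>
    MeasurableSpace.comap (canon (X := X) s) inferInstance) t le_rfl

lemma mUpTo_le (t : Icc (0:ℝ) 1) : mUpTo t ≤ pathSpaceMeasurableSpace X :=
  iSup₂_le fun s _ => mAt_le s

lemma mFrom_le (t : Icc (0:ℝ) 1) : mFrom t ≤ pathSpaceMeasurableSpace X :=
  iSup₂_le fun s _ => mAt_le s

lemma Conditionable.sigmaFinite_trim {Q : Measure (PathSpace X)} (hQ : Conditionable Q)
    (t : Icc (0:ℝ) 1) : SigmaFinite (Q.trim (mAt_le t)) :=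
  have := hQ t
  sigmaFinite_trim_comap (measurable_canon t)

variable {R : Measure (PathSpace X)} {t : Icc (0:ℝ) 1}

lemma IsMarkovMeasure.isCondExpNN_mUpTo_condLExp (hR : IsMarkovMeasure R)
    {f : PathSpace X → ℝ≥0∞} (hf : Measurable[mFrom t] f) :
    IsCondExpNN R (mUpTo t) f R⁻[f|mAt t] := by
  have := hR.1.sigmaFinite_trim t
  have hmeas : ∀ g, Measurable[mUpTo t] R⁻[g|mAt t] := fun g =>
    (measurable_condLExp _ _ g).mono (mAt_le_mUpTo t) le_rfl
  refine Measurable.ennreal_induction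
    (motive := fun f => IsCondExpNN R (mUpTo t) f R⁻[f|mAt t]) ?_ ?_ ?_ hf
  · intro c B hB
    have hB1 : Measurable (B.indicator fun _ => (1 : ℝ≥0∞)) :=
      measurable_const.indicator (mFrom_le t B hB)
    have hc : (B.indicator fun _ => c) = c • B.indicator fun _ => (1 : ℝ≥0∞) := by
      ext ω
      by_cases hω : ω ∈ B <;> simp [hω]
    rw [hc]
    exact ((hR.2 t B hB _ (isCondExpNN_condLExp (mAt_le t) _)).const_smul (mUpTo_le t) hB1 c)
      |>.congr_ae (hmeas _) (condLExp_smul _ hB1.aemeasurable c).symm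
  · intro f g _ hf _ hCf hCg
    have hf0 : Measurable f := hf.mono (mFrom_le t) le_rfl
    exact (hCf.add (mUpTo_le t) hCg hf0).congr_ae (hmeas _)
      (condLExp_add_left g hf0.aemeasurable).symm
  · intro f hf hmono hCf
    have hf0 : ∀ n, Measurable (f n) := fun n => (hf n).mono (mFrom_le t) le_rfl
    exact (IsCondExpNN.iSup (mUpTo_le t) hCf hf0 hmono (ae_monotone_condLExp hmono)).congr_ae
      (hmeas _) (condLExp_iSup_ae_eq (mAt_le t) hf0 hmono).symm

lemma IsMarkovMeasure.isCondExpNN_mUpTo (hR : IsMarkovMeasure R) {f C : PathSpace X → ℝ≥0∞}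
    (hf : Measurable[mFrom t] f) (hC : IsCondExpNN R (mAt t) f C) :
    IsCondExpNN R (mUpTo t) f C :=
  have := hR.1.sigmaFinite_trim t
  (hR.isCondExpNN_mUpTo_condLExp hf).congr_ae (hC.1.mono (mAt_le_mUpTo t) le_rfl)
    (hC.ae_eq_condLExp (mAt_le t)).symm

end PathSpace

theorem markov_condexp_product_of_density_general
    {X : Type*} [TopologicalSpace X] [MeasurableSpace X]
    (R : Measure (PathSpace X)) (hR : IsMarkovMeasure R)
    (t : Icc (0:ℝ) 1) (α β : PathSpace X → ENNReal)
    (hα : Measurable[mUpTo t] α) (hβ : Measurable[mFrom t] β)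
    (P : Measure (PathSpace X)) (hPc : Conditionable P)
    (hP : ∀ f : PathSpace X → ENNReal, Measurable f →
      ∫⁻ ω, f ω ∂P = ∫⁻ ω, f ω * (α ω * β ω) ∂ R)
    (Cαβ Cα Cβ : PathSpace X → ENNReal)
    (hαβ : IsCondExpNN R (mAt t) (fun ω => α ω * β ω) Cαβ)
    (hCα : IsCondExpNN R (mAt t) α Cα) (hCβ : IsCondExpNN R (mAt t) β Cβ) :
    (∀ᵐ ω ∂P,
      (0 < Cα ω ∧ Cα ω < ⊤) ∧ (0 < Cβ ω ∧ Cβ ω < ⊤) ∧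
      Cαβ ω = Cα ω * Cβ ω ∧ 0 < Cαβ ω ∧ Cαβ ω < ⊤) ∧
    (∀ᵐ ω ∂ R,
      Cαβ ω = Set.indicator {ω' | Cα ω' < ⊤ ∧ Cβ ω' < ⊤}
        (fun ω' => Cα ω' * Cβ ω') ω ∧ Cαβ ω < ⊤) := by
  have := hR.1.sigmaFinite_trim t
  have hPR : P = R.withDensity fun ω => α ω * β ω := eq_withDensity_of_forall_lintegral_eq hP
  have : SigmaFinite ((R.withDensity fun ω => α ω * β ω).trim (mAt_le t)) :=
    hPR ▸ hPc.sigmaFinite_trim t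
  have hprod : Cαβ =ᵐ[R] Cα * Cβ :=
    hαβ.ae_eq_mul (mAt_le_mUpTo t) (mUpTo_le t) hα (hβ.mono (mFrom_le t) le_rfl) hCα
      (hR.isCondExpNN_mUpTo hβ hCβ) hCβ.1
  have hfin : ∀ᵐ ω ∂ R, Cαβ ω < ⊤ := hαβ.ae_lt_top (mAt_le t)
  have hpos : ∀ᵐ ω ∂P, Cαβ ω ≠ 0 := hPR ▸ hαβ.ae_withDensity_ne_zero (mAt_le t)
  have hPR_ac : P ≪ R := hPR ▸ withDensity_absolutelyContinuous _ _
  refine ⟨?_, ?_⟩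
  · filter_upwards [hPR_ac.ae_le hprod, hPR_ac.ae_le hfin, hpos] with ω hω hω_fin hω_pos
    rw [hω, Pi.mul_apply] at hω_fin hω_pos ⊢
    obtain ⟨hα0, hβ0⟩ := mul_ne_zero_iff.1 hω_pos
    exact ⟨⟨pos_iff_ne_zero.2 hα0, ENNReal.lt_top_of_mul_ne_top_left hω_fin.ne hβ0⟩,
      ⟨pos_iff_ne_zero.2 hβ0, ENNReal.lt_top_of_mul_ne_top_right hω_fin.ne hα0⟩,
      rfl, pos_iff_ne_zero.2 hω_pos, hω_fin⟩
  · filter_upwards [hprod, hfin] with ω hω hω_fin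
    refine ⟨?_, hω_fin⟩
    rw [hω, Pi.mul_apply] at hω_fin ⊢
    exact mul_eq_indicator_of_mul_lt_top hω_fin

/-- Lemma (Léonard, Lemma 3.1-(b)). Let `R` be a Markov measure and `P` a conditionable
path measure with `P ≺ R` and density `dP/dR = α·β`, where `α` is `σ(X_{[0,t]})`-measurable
and `β` is `σ(X_{[t,1]})`-measurable, both nonnegative. Then `P`-a.e.,
`E_R(α|X_t), E_R(β|X_t) ∈ (0,∞)` and `E_R(αβ|X_t) = E_R(α|X_t)·E_R(β|X_t) ∈ (0,∞)`;
furthermore `R`-a.e.,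
`E_R(αβ|X_t) = 1_{{E_R(α|X_t)<∞, E_R(β|X_t)<∞}}·E_R(α|X_t)·E_R(β|X_t) ∈ [0,∞)`. -/
theorem markov_condexp_product_of_density
    {X : Type*} [TopologicalSpace X] [MeasurableSpace X] [PolishSpace X] [BorelSpace X]
    (R : Measure (PathSpace X)) (hR : IsMarkovMeasure R)
    (t : Icc (0:ℝ) 1) (α β : PathSpace X → ENNReal)
    (hα : Measurable[mUpTo t] α) (hβ : Measurable[mFrom t] β)
    (hαfin : ∀ ω, α ω ≠ ⊤) (hβfin : ∀ ω, β ω ≠ ⊤)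
    (P : Measure (PathSpace X)) (hPc : Conditionable P)
    (hP : ∀ f : PathSpace X → ENNReal, Measurable f →
      ∫⁻ ω, f ω ∂P = ∫⁻ ω, f ω * (α ω * β ω) ∂ R)
    (Cαβ Cα Cβ : PathSpace X → ENNReal)
    (hαβ : IsCondExpNN R (mAt t) (fun ω => α ω * β ω) Cαβ)
    (hCα : IsCondExpNN R (mAt t) α Cα) (hCβ : IsCondExpNN R (mAt t) β Cβ) :
    (∀ᵐ ω ∂P,
      (0 < Cα ω ∧ Cα ω < ⊤) ∧ (0 < Cβ ω ∧ Cβ ω < ⊤) ∧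
      Cαβ ω = Cα ω * Cβ ω ∧ 0 < Cαβ ω ∧ Cαβ ω < ⊤) ∧
    (∀ᵐ ω ∂ R,
      Cαβ ω = Set.indicator {ω' | Cα ω' < ⊤ ∧ Cβ ω' < ⊤}
        (fun ω' => Cα ω' * Cβ ω') ω ∧ Cαβ ω < ⊤) :=
  markov_condexp_product_of_density_general R hR t α β hα hβ P hPc hP Cαβ Cα Cβ hαβ hCα hCβ
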